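/- The relation ∼_K defined on a finite monoid M by: x ∼_K y iff for all idempotents e ∈ M, either ex and ey are both strictly J-below e, or ex = ey, is a congruence on M (an equivalence relation compatible with multiplication on both sides). -/
import Mathlib


variable {M : Type*}

def jLe [Monoid M] (u v : M) : Prop := ∃ p q, u = p * v * q
def jLt [Monoid M] (u v : M) : Prop := jLe u v ∧ ¬ jLe v u
def simK [Monoid M] (x y : M) : Prop :=
  ∀ e : M, e * e = e → (jLt (e * x) e ∧ jLt (e * y) e) ∨ e * x = e * y

/-- In a finite monoid, some positive power of any element is idempotent. -/
lemma exists_idem_pow [Monoid M] [Finite M] (a : M) :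
    ∃ n, 0 < n ∧ a ^ n * a ^ n = a ^ n := by
  obtain ⟨m, n, hne, h⟩ := Finite.exists_ne_map_eq_of_infinite (fun k : ℕ => a ^ k)
  wlog hmn : m < n generalizing m n
  · exact this n m hne.symm h.symm (by omega)
  set d := n - m with hd
  have hd0 : 0 < d := by omega
  have step : ∀ s, m ≤ s → a ^ s = a ^ (s + d) := by
    intro s hs
    obtain ⟨c, rfl⟩ : ∃ c, s = m + c := ⟨s - m, by omega⟩
    have : a ^ (m + c) = a ^ (n + c) := by
      rw [pow_add, pow_add, h]
    rw [this]
    congr 1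
    omega
  have iter : ∀ j s, m ≤ s → a ^ s = a ^ (s + j * d) := by
    intro j
    induction j with
    | zero => simp
    | succ k ih =>
      intro s hs
      rw [ih s hs, step (s + k * d) (by omega)]
      congr 1
      ring
  refine ⟨(m + 1) * d, by positivity, ?_⟩
  rw [← pow_add]
  exact (iter (m + 1) ((m + 1) * d) (by nlinarith)).symm

/-- Stability-type lemma: if `e` is idempotent and `e = p * (e * w)`,
then `e = e * (w * t)` for some `t`. -/
lemma stab_aux [Monoid M] [Finite M] {e p w : M} (he : e * e = e)
    (h : e = p * (e * w)) : ∃ t, e * (w * t) = e := by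
  have iter : ∀ k, e = p ^ k * (e * w ^ k) := by
    intro k
    induction k with
    | zero => simp
    | succ k ih =>
      calc e = p * (e * w) := h
        _ = p * ((p ^ k * (e * w ^ k)) * w) := by rw [← ih]
        _ = (p * p ^ k) * (e * (w ^ k * w)) := by simp [mul_assoc]
        _ = p ^ (k + 1) * (e * w ^ (k + 1)) := by rw [← pow_succ', ← pow_succ]
  obtain ⟨k, hk0, hk⟩ := exists_idem_pow p
  have h1 : e = p ^ k * (e * w ^ k) := iter k
  have h2 : p ^ k * e = e := by
    conv_lhs => rw [h1, ← mul_assoc, hk, ← h1]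
  have h3 : e = e * w ^ k := by
    conv_lhs => rw [h1, ← mul_assoc, h2]
  obtain ⟨k', rfl⟩ : ∃ k', k = k' + 1 := ⟨k - 1, by omega⟩
  exact ⟨w ^ k', by rw [← pow_succ']; exact h3.symm⟩

/-- Key lemma for left compatibility. -/
lemma key_lemma [Monoid M] [Finite M] {e z x y : M} (he : e * e = e)
    (hxy : simK x y) (hJ : jLe e (e * (z * x))) : e * (z * x) = e * (z * y) := by
  obtain ⟨p, q, hpq⟩ := hJ
  have hpq' : e = p * (e * (z * (x * q))) := by
    calc e = p * (e * (z * x)) * q := hpq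
      _ = p * (e * (z * (x * q))) := by simp [mul_assoc]
  obtain ⟨t0, ht0⟩ := stab_aux he hpq'
  set t := q * t0 with htdef
  have het : e * (z * (x * t)) = e := by
    rw [htdef]
    calc e * (z * (x * (q * t0))) = e * (z * (x * q) * t0) := by simp [mul_assoc]
      _ = e := ht0
  have het2 : ∀ c : M, e * (z * (x * (t * c))) = e * c := by
    intro c
    have := congrArg (· * c) het
    simpa [mul_assoc] using this
  have he2 : ∀ c : M, e * (e * c) = e * c := by
    intro c
    have := congrArg (· * c) he
    simpa [mul_assoc] using this
  set f := x * (t * (e * z)) with hfdef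
  have hf : f * f = f := by
    rw [hfdef]
    simp only [mul_assoc]
    rw [het2, he2]
  have hle : jLe f (f * x) := by
    refine ⟨1, t * (e * z), ?_⟩
    rw [hfdef]
    simp only [one_mul, mul_assoc]
    rw [het2, he2]
  rcases hxy f hf with ⟨hstrict, _⟩ | heq
  · exact absurd hle hstrict.2
  · have hfx : ∀ c : M, f * c = x * (t * (e * (z * c))) := by
      intro c; rw [hfdef]; simp [mul_assoc]
    calc e * (z * x) = e * (e * (z * x)) := (he2 _).symm
      _ = e * (z * (x * (t * (e * (z * x))))) := (het2 _).symm
      _ = e * (z * (f * x)) := by rw [hfx]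
      _ = e * (z * (f * y)) := by rw [heq]
      _ = e * (z * (x * (t * (e * (z * y))))) := by rw [hfx]
      _ = e * (e * (z * y)) := het2 _
      _ = e * (z * y) := he2 _

lemma simK_symm [Monoid M] {x y : M} (h : simK x y) : simK y x := by
  intro e he
  rcases h e he with ⟨h1, h2⟩ | h3
  · exact Or.inl ⟨h2, h1⟩
  · exact Or.inr h3.symm

theorem stmt2 [Monoid M] [Finite M] :
    Equivalence (simK (M := M)) ∧
      (∀ x y z : M, simK x y → simK (z * x) (z * y) ∧ simK (x * z) (y * z)) := by
  constructor
  · refine ⟨fun x e he => Or.inr rfl, simK_symm, ?_⟩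
    intro x y z hxy hyz e he
    rcases hxy e he with ⟨hx, hy⟩ | hexy <;> rcases hyz e he with ⟨hy', hz⟩ | heyz
    · exact Or.inl ⟨hx, hz⟩
    · exact Or.inl ⟨hx, heyz ▸ hy⟩
    · exact Or.inl ⟨by rw [hexy]; exact hy', hz⟩
    · exact Or.inr (hexy.trans heyz)
  · intro x y z hxy
    constructor
    · -- left compatibility
      intro e he
      by_cases h1 : jLe e (e * (z * x))
      · exact Or.inr (key_lemma he hxy h1)
      · by_cases h2 : jLe e (e * (z * y))
        · exact Or.inr (key_lemma he (simK_symm hxy) h2).symm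
        · refine Or.inl ⟨⟨⟨1, z * x, by simp⟩, h1⟩, ⟨1, z * y, by simp⟩, h2⟩
    · -- right compatibility
      intro e he
      rcases hxy e he with ⟨hx, hy⟩ | heq
      · refine Or.inl ⟨⟨⟨1, x * z, by simp⟩, ?_⟩, ⟨1, y * z, by simp⟩, ?_⟩
        · rintro ⟨p, q, hp⟩
          refine hx.2 ⟨p, z * q, ?_⟩
          calc e = p * (e * (x * z)) * q := hp
            _ = p * (e * x) * (z * q) := by simp [mul_assoc]
        · rintro ⟨p, q, hp⟩
          refine hy.2 ⟨p, z * q, ?_⟩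
          calc e = p * (e * (y * z)) * q := hp
            _ = p * (e * y) * (z * q) := by simp [mul_assoc]
      · exact Or.inr (by rw [← mul_assoc, heq, mul_assoc])
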